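/- For every n ≥ 3, the polynomial P_n defined by the recursion P_3 = 1, P_n(t) = P_{n-1}(t)·(1+t) + t·∑_{i=3}^{n-2} C(n-2, i-1)·P_i(t)·P_{n+1-i}(t) is γ-positive: writing P_n(t) = ∑_{i=0}^{⌊(n-3)/2⌋} γ_{n,i} t^i (1+t)^{n-3-2i}, all γ_{n,i} are nonnegative. -/

import Mathlib

/-!
Put `u = t / (1 + t)²`. Then `P_n(t) = (1 + t)^(n-3) Γ_n(u)`, where `Γ_3 = 1` and
`Γ_n = Γ_{n-1} + u ∑ C(n-2, i-1) Γ_i Γ_{n+1-i}`: the factors of `1 + t` balance because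
`t = u (1 + t)²`. This recursion has nonnegative coefficients, so `Γ_n ∈ ℕ[u]`, and by uniqueness
of the expansion in the basis `t^i (1 + t)^(n-3-2i)` the γ-vector of `P_n` is the coefficient
sequence of `Γ_n`. The substitution is carried out in the fraction field of `ℤ[t]`.
-/

open Polynomial Finset

section Keel

variable {S : Type*} [CommSemiring S]

/-- With `a = 1 + 𝕃` and `b = 𝕃` this is Keel's recursion for the classes `[M̄_{0,n}]`. -/
def SatisfiesKeelRecursion (a b : S) (f : ℕ → S) : Prop :=
  ∀ n, 3 < n → f n = f (n-1) * a +
    b * ∑ i ∈ Finset.Icc 3 (n-2), ((n-2).choose (i-1) : S) * f i * f (n+1-i)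

theorem SatisfiesKeelRecursion.map {T : Type*} [CommSemiring T] {a b : S} {f : ℕ → S}
    (hf : SatisfiesKeelRecursion a b f) (φ : S →+* T) :
    SatisfiesKeelRecursion (φ a) (φ b) (φ ∘ f) := by
  intro n hn
  simp only [Function.comp_apply, hf n hn, map_add, map_mul, map_sum, map_natCast]

theorem SatisfiesKeelRecursion.unique {a b : S} {f g : ℕ → S}
    (hf : SatisfiesKeelRecursion a b f) (hg : SatisfiesKeelRecursion a b g) (h3 : f 3 = g 3) :
    ∀ n, 3 ≤ n → f n = g n := by
  intro n
  induction n using Nat.strong_induction_on with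
  | _ n ih =>
    intro hn
    rcases hn.eq_or_lt with rfl | hn
    · exact h3
    rw [hf n hn, hg n hn, ih (n-1) (by omega) (by omega)]
    congr 2
    refine Finset.sum_congr rfl fun i hi => ?_
    obtain ⟨hi3, hin⟩ := Finset.mem_Icc.mp hi
    rw [ih i (by omega) hi3, ih (n+1-i) (by omega) (by omega)]

end Keel

noncomputable def gammaPoly : ℕ → ℕ[X]
  | 0 | 1 | 2 => 0
  | 3 => 1
  | n+4 => gammaPoly (n+3) + X * ∑ i ∈ (Finset.Icc 3 (n+2)).attach,
      ((n+2).choose (i.1-1) : ℕ[X]) * gammaPoly i.1 * gammaPoly (n+5-i.1)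
decreasing_by all_goals first | omega | (have := Finset.mem_Icc.mp i.2; omega)

theorem gammaPoly_add_four (n : ℕ) : gammaPoly (n+4) = gammaPoly (n+3) +
    X * ∑ i ∈ Finset.Icc 3 (n+2), ((n+2).choose (i-1) : ℕ[X]) * gammaPoly i * gammaPoly (n+5-i) := by
  rw [gammaPoly, Finset.sum_attach _ fun i =>
    ((n+2).choose (i-1) : ℕ[X]) * gammaPoly i * gammaPoly (n+5-i)]

theorem natDegree_gammaPoly_le (n : ℕ) : (gammaPoly n).natDegree ≤ (n-3)/2 := by
  induction n using Nat.strong_induction_on with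
  | _ n ih =>
    match n with
    | 0 | 1 | 2 | 3 => simp [gammaPoly]
    | m+4 =>
      rw [gammaPoly_add_four]
      refine natDegree_add_le_of_degree_le ((ih (m+3) (by omega)).trans (by omega)) ?_
      rw [Finset.mul_sum]
      refine natDegree_sum_le_of_forall_le _ _ fun p hp => ?_
      obtain ⟨hp3, hpm⟩ := Finset.mem_Icc.mp hp
      have h₁ := ih p (by omega)
      have h₂ := ih (m+5-p) (by omega)
      calc _ ≤ (X : ℕ[X]).natDegree + (((m+2).choose (p-1) : ℕ[X]).natDegree +
            (gammaPoly p).natDegree + (gammaPoly (m+5-p)).natDegree) :=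
            natDegree_mul_le.trans (by
              gcongr; exact natDegree_mul_le.trans (by gcongr; exact natDegree_mul_le))
        _ ≤ _ := by rw [natDegree_natCast]; have := natDegree_X_le (R := ℕ); omega

theorem satisfiesKeelRecursion_gammaPoly {S : Type*} [CommSemiring S] (u v : S) :
    SatisfiesKeelRecursion v (u * v ^ 2)
      (fun n => v ^ (n-3) * (gammaPoly n).eval₂ (Nat.castRingHom S) u) := by
  intro n hn
  obtain ⟨m, rfl⟩ : ∃ m, n = m + 4 := ⟨n - 4, by omega⟩
  simp only [show m+4-1 = m+3 by omega, show m+4-2 = m+2 by omega, show m+4+1 = m+5 by omega,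
    gammaPoly_add_four, eval₂_add, eval₂_mul, eval₂_finsetSum, eval₂_natCast, eval₂_X, mul_add,
    Finset.mul_sum]
  congr 1
  · rw [show m+4-3 = m+1 by omega, show m+3-3 = m by omega, pow_succ]; ring
  · refine Finset.sum_congr rfl fun p hp => ?_
    obtain ⟨hp3, hpm⟩ := Finset.mem_Icc.mp hp
    rw [show m+4-3 = 2 + (p-3) + (m+5-p-3) by omega, pow_add, pow_add]
    ring

section GammaExpansion

variable {R : Type*}

noncomputable def gammaExpansion [Semiring R] (d : ℕ) (c : ℕ → R) : R[X] :=
  ∑ i ∈ Finset.range (d / 2 + 1), C (c i) * X ^ i * (1 + X) ^ (d - 2 * i)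

theorem coeff_gammaExpansion [Semiring R] (d : ℕ) (c : ℕ → R) (k : ℕ) :
    (gammaExpansion d c).coeff k =
      ∑ i ∈ Finset.range (d / 2 + 1), if i ≤ k then c i * (d - 2 * i).choose (k - i) else 0 := by
  simp only [gammaExpansion, finsetSum_coeff]
  refine Finset.sum_congr rfl fun i _ => ?_
  rw [mul_assoc, X_pow_mul, ← mul_assoc, coeff_mul_X_pow']
  split_ifs
  · rw [coeff_C_mul, add_comm (1 : R[X]) X, coeff_X_add_one_pow]
  · rfl

theorem eq_zero_of_gammaExpansion_eq_zero [Semiring R] {d : ℕ} {c : ℕ → R}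
    (h : gammaExpansion d c = 0) : ∀ k ≤ d / 2, c k = 0 := by
  intro k
  induction k using Nat.strong_induction_on with
  | _ k ih =>
    intro hk
    have hcoeff := congrArg (coeff · k) h
    simp only [coeff_gammaExpansion, coeff_zero] at hcoeff
    rwa [Finset.sum_eq_single k, if_pos le_rfl, Nat.sub_self, Nat.choose_zero_right, Nat.cast_one,
      mul_one] at hcoeff
    · intro i _ hik
      rcases hik.lt_or_gt with hlt | hgt
      · rw [ih i hlt (by omega), zero_mul, ite_self]
      · rw [if_neg (by omega)]
    · intro hkN
      exact absurd (Finset.mem_range.mpr (by omega)) hkN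

theorem gammaExpansion_sub [Ring R] (d : ℕ) (a b : ℕ → R) :
    gammaExpansion d a - gammaExpansion d b = gammaExpansion d (a - b) := by
  simp only [gammaExpansion, ← Finset.sum_sub_distrib, Pi.sub_apply, map_sub, sub_mul]

theorem eq_of_gammaExpansion_eq [Ring R] {d : ℕ} {a b : ℕ → R}
    (h : gammaExpansion d a = gammaExpansion d b) : ∀ k ≤ d / 2, a k = b k := by
  intro k hk
  have hsub : gammaExpansion d (a - b) = 0 := by rw [← gammaExpansion_sub, h, sub_self]
  exact sub_eq_zero.mp (eq_zero_of_gammaExpansion_eq_zero hsub k hk)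

end GammaExpansion

theorem map_gammaExpansion {S : Type*} [CommRing S] (φ : ℤ[X] →+* S) (u : S)
    (hu : φ X = u * φ (1 + X) ^ 2) (d : ℕ) (c : ℕ → ℤ) :
    φ (gammaExpansion d c) =
      φ (1 + X) ^ d * ∑ i ∈ Finset.range (d / 2 + 1), (c i : S) * u ^ i := by
  rw [gammaExpansion, map_sum, Finset.mul_sum]
  refine Finset.sum_congr rfl fun i hi => ?_
  have hi : 2 * i ≤ d := by have := Finset.mem_range.mp hi; omega
  have hC : φ (C (c i)) = c i := eq_intCast (φ.comp C) _
  rw [map_mul, map_mul, map_pow, map_pow, hu, hC, ← Nat.add_sub_cancel' hi, pow_add,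
    Nat.add_sub_cancel_left, pow_mul]
  ring

theorem stmt6 (P : ℕ → Polynomial ℤ)
    (h3 : P 3 = 1)
    (hrec : ∀ n, 3 < n → P n = P (n-1) * (1 + X) +
      X * ∑ i ∈ Finset.Icc 3 (n-2), ((n-2).choose (i-1) : Polynomial ℤ) * P i * P (n+1-i)) :
    ∀ n, 3 ≤ n → ∀ γ : ℕ → ℤ,
      (∀ i, (n - 3) / 2 < i → γ i = 0) →
      P n = ∑ i ∈ Finset.range ((n - 3) / 2 + 1),
          C (γ i) * X ^ i * (1 + X) ^ (n - 3 - 2 * i) →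
      ∀ i, 0 ≤ γ i := by
  intro n hn γ hγ hexp i
  let ι := algebraMap ℤ[X] (FractionRing ℤ[X])
  have hι : Function.Injective ι := IsFractionRing.injective _ _
  have hv : ι (1 + X) ≠ 0 := (map_ne_zero_iff ι hι).mpr (by simpa using congrArg (coeff · 0) ·)
  let u := ι X / ι (1 + X) ^ 2
  have hu : ι X = u * ι (1 + X) ^ 2 := (div_mul_cancel₀ _ (pow_ne_zero 2 hv)).symm
  have hPrec : SatisfiesKeelRecursion (ι (1 + X)) (u * ι (1 + X) ^ 2) (ι ∘ P) :=
    hu ▸ SatisfiesKeelRecursion.map (a := 1 + X) (b := X) hrec ι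
  have hP := hPrec.unique (satisfiesKeelRecursion_gammaPoly u _) (by simp [h3, gammaPoly]) n hn
  have hPγ : P n = gammaExpansion (n - 3) fun k => ((gammaPoly n).coeff k : ℤ) := by
    refine hι (hP.trans ?_)
    rw [map_gammaExpansion ι u hu,
      eval₂_eq_sum_range' _ ((natDegree_gammaPoly_le n).trans_lt (Nat.lt_add_one _))]
    simp only [eq_natCast, Int.cast_natCast]
  rcases le_or_gt i ((n - 3) / 2) with hi | hi
  · rw [eq_of_gammaExpansion_eq (hexp.symm.trans hPγ) i hi]
    positivity
  · rw [hγ i hi]
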